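/- Let f : ℝⁿ → ℝ be twice differentiable (in the sense that the second-order Taylor expansion exists) at almost every point. Then for almost every point x in the set {f = 0, df = 0}, the Hessian of f at x is also zero. Consequently, f vanishes to second order at almost every point of its zero set where df = 0. -/

import Mathlib

/-!
Let `s = {df = 0}`. By the Lebesgue density theorem for balls with moving centres, at almost
every point `x` of `s` the set `s` meets every ball `B(x + r v, ρ r)` for small `r > 0`, so every
vector is tangent to `s` at `x` and `s` is a set of unique differentiability at `x`. Since the
function `df` is constant on `s`, its derivative within `s`, and hence `D²f(x)`, vanishes.
-/

open MeasureTheory Filter Metric Set Topology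

theorem mem_tangentConeAt_of_frequently_inter_closedBall_nonempty
    {E : Type*} [NormedAddCommGroup E] [NormedSpace ℝ E] {s : Set E} {x v : E}
    (h : ∀ ρ > 0,
      ∃ᶠ r in 𝓝[>] (0 : ℝ), (s ∩ closedBall (x + r • v) (ρ * r)).Nonempty) :
    v ∈ tangentConeAt ℝ s x := by
  have hρ : ∀ n : ℕ, (0 : ℝ) < 1 / (n + 1) := fun n => Nat.one_div_pos_of_nat
  have hρ_lim : Tendsto (fun n : ℕ => (1 : ℝ) / (n + 1)) atTop (𝓝 0) :=
    tendsto_one_div_add_atTop_nhds_zero_nat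
  choose r hr y hys hyv using fun n =>
    (Eventually.and_frequently (Ioo_mem_nhdsGT (hρ n)) (h _ (hρ n))).exists
  have hr_lim : Tendsto r atTop (𝓝 0) :=
    squeeze_zero (fun n => (hr n).1.le) (fun n => (hr n).2.le) hρ_lim
  have hrescaled : Tendsto (fun n => (r n)⁻¹ • (y n - x)) atTop (𝓝 v) := by
    refine tendsto_iff_norm_sub_tendsto_zero.2 <|
      squeeze_zero (fun _ => norm_nonneg _) (fun n => ?_) hρ_lim
    have hrn := (hr n).1
    calc ‖(r n)⁻¹ • (y n - x) - v‖ = (r n)⁻¹ * ‖y n - (x + r n • v)‖ := by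
          rw [← norm_smul_of_nonneg (inv_nonneg.2 hrn.le), smul_sub, smul_sub, smul_add,
            inv_smul_smul₀ hrn.ne', sub_sub]
      _ ≤ (r n)⁻¹ * (1 / (n + 1) * r n) := by
          gcongr; exact mem_closedBall_iff_norm.1 (hyv n)
      _ = 1 / (n + 1) := by field_simp
  refine mem_tangentConeAt_of_seq atTop (fun n => (r n)⁻¹) (fun n => y n - x) ?_ ?_ hrescaled
  · have hdisp := hr_lim.smul hrescaled
    rw [zero_smul] at hdisp
    exact hdisp.congr fun n => smul_inv_smul₀ (hr n).1.ne' _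
  · exact Eventually.of_forall fun n => by simpa using hys n

theorem ae_restrict_eventually_inter_closedBall_nonempty
    {E : Type*} [NormedAddCommGroup E] [NormedSpace ℝ E] [MeasurableSpace E] [BorelSpace E]
    [SecondCountableTopology E] (μ : Measure E) [IsUnifLocDoublingMeasure μ]
    [IsLocallyFiniteMeasure μ] (s : Set E) :
    ∀ᵐ x ∂μ.restrict s, ∀ v : E, ∀ ρ > 0,
      ∀ᶠ r in 𝓝[>] (0 : ℝ), (s ∩ closedBall (x + r • v) (ρ * r)).Nonempty := by
  filter_upwards [ae_all_iff.2 fun K : ℕ =>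
    IsUnifLocDoublingMeasure.ae_tendsto_measure_inter_div μ s K] with x hx v ρ hρ
  obtain ⟨K, hK⟩ := exists_nat_ge (‖v‖ / ρ)
  have hradius : Tendsto (fun r => ρ * r) (𝓝[>] 0) (𝓝[>] 0) :=
    tendsto_nhdsWithin_of_tendsto_nhds_of_eventually_within _
      (((continuous_const_mul ρ).tendsto' 0 0 (mul_zero ρ)).mono_left nhdsWithin_le_nhds)
      (eventually_nhdsWithin_of_forall fun r (hr : 0 < r) => mul_pos hρ hr)
  have hcentre : ∀ᶠ r in 𝓝[>] (0 : ℝ), x ∈ closedBall (x + r • v) (K * (ρ * r)) := by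
    filter_upwards [self_mem_nhdsWithin] with r (hr : 0 < r)
    rw [mem_closedBall_iff_norm, sub_add_cancel_left, norm_neg, norm_smul,
      Real.norm_of_nonneg hr.le, ← mul_assoc, mul_comm r]
    gcongr
    rwa [div_le_iff₀ hρ] at hK
  filter_upwards [(hx K _ _ hradius hcentre).eventually (lt_mem_nhds zero_lt_one)] with r hr
  refine nonempty_of_measure_ne_zero (μ := μ) fun h0 => ?_
  simp [h0] at hr

theorem ae_restrict_uniqueDiffWithinAt
    {E : Type*} [NormedAddCommGroup E] [NormedSpace ℝ E] [MeasurableSpace E] [BorelSpace E]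
    [SecondCountableTopology E] (μ : Measure E) [IsUnifLocDoublingMeasure μ]
    [IsLocallyFiniteMeasure μ] (s : Set E) :
    ∀ᵐ x ∂μ.restrict s, UniqueDiffWithinAt ℝ s x := by
  filter_upwards [ae_restrict_eventually_inter_closedBall_nonempty μ s] with x hx
  have hcone : tangentConeAt ℝ s x = univ := eq_univ_of_forall fun v =>
    mem_tangentConeAt_of_frequently_inter_closedBall_nonempty fun ρ hρ => (hx v ρ hρ).frequently
  exact ⟨by simp [hcone], mem_closure_of_nonempty_tangentConeAt (hcone ▸ univ_nonempty)⟩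

theorem UniqueDiffWithinAt.fderiv_eq_zero_of_eqOn_const
    {𝕜 E F : Type*} [NontriviallyNormedField 𝕜] [NormedAddCommGroup E] [NormedSpace 𝕜 E]
    [NormedAddCommGroup F] [NormedSpace 𝕜 F] {g : E → F} {s : Set E} {x : E}
    (hs : UniqueDiffWithinAt 𝕜 s x) (hg : DifferentiableAt 𝕜 g x)
    (hconst : EqOn g (fun _ => g x) s) : fderiv 𝕜 g x = 0 :=
  hs.eq hg.hasFDerivAt.hasFDerivWithinAt ((hasFDerivWithinAt_const (g x) x s).congr hconst rfl)

/-- Kinderlehrer–Stampacchia: if `f : ℝⁿ → ℝ` is twice differentiable at almost every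
point, then at almost every point of the set `{f = 0, df = 0}` the second derivative
of `f` also vanishes; i.e. `f` vanishes to second order at a.e. point of that set. -/
theorem hessian_zero_ae_on_critical_zero_set (n : ℕ)
    (f : EuclideanSpace ℝ (Fin n) → ℝ)
    (hf : ∀ᵐ x ∂(volume : Measure (EuclideanSpace ℝ (Fin n))),
      DifferentiableAt ℝ f x ∧ DifferentiableAt ℝ (fderiv ℝ f) x) :
    ∀ᵐ x ∂(volume : Measure (EuclideanSpace ℝ (Fin n))),
      (f x = 0 ∧ fderiv ℝ f x = 0) →
        (f x = 0 ∧ fderiv ℝ f x = 0 ∧ fderiv ℝ (fderiv ℝ f) x = 0) := by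
  filter_upwards [hf, ae_imp_of_ae_restrict
    (ae_restrict_uniqueDiffWithinAt volume {y | fderiv ℝ f y = 0})] with x hx hunique hcrit
  have hconst : EqOn (fderiv ℝ f) (fun _ => fderiv ℝ f x) {y | fderiv ℝ f y = 0} :=
    fun y hy => hy.trans hcrit.2.symm
  exact ⟨hcrit.1, hcrit.2, (hunique hcrit.2).fderiv_eq_zero_of_eqOn_const hx.2 hconst⟩
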